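/- Let P0, P1 ⊆ R^{d-1} be (d-1)-polytopes, P their Cayley embedding, F0 a nonempty face of P0 and F1 a nonempty face of P1, and F the Cayley embedding of F0 and F1. Then F is a facet of P (a face of dimension d-1) if and only if C_{P0}(F0) ∩ C_{P1}(F1) = {λ r : λ > 0} for some nonzero r ∈ R^{d-1}. -/

import Mathlib

open Set Pointwise

noncomputable section

/-- Dot product of two vectors in `Fin n → ℝ`. -/
def dotp {n : ℕ} (c x : Fin n → ℝ) : ℝ := ∑ i, c i * x i

/-- Dimension of a subset of `Fin n → ℝ` (dimension of its affine hull). -/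
def sdim {n : ℕ} (S : Set (Fin n → ℝ)) : ℕ := Module.finrank ℝ (vectorSpan ℝ S)

/-- A polytope is the convex hull of a finite set. -/
def IsPolytope {n : ℕ} (P : Set (Fin n → ℝ)) : Prop :=
  ∃ S : Finset (Fin n → ℝ), P = convexHull ℝ (S : Set (Fin n → ℝ))

/-- The set of maximizers of the linear functional `dotp c` over `P`. -/
def maxFace {n : ℕ} (P : Set (Fin n → ℝ)) (c : Fin n → ℝ) : Set (Fin n → ℝ) :=
  {x ∈ P | ∀ y ∈ P, dotp c y ≤ dotp c x}

/-- `F` is a (nonempty, possibly improper) face of the polytope `P`: the set of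
maximizers of some linear functional over `P`. -/
def IsFaceOf {n : ℕ} (P F : Set (Fin n → ℝ)) : Prop := ∃ c, F = maxFace P c

/-- The optimality cone of a face `F` of `P`: the set of `c` whose set of maximizers
over `P` is exactly `F`. -/
def optCone {n : ℕ} (P F : Set (Fin n → ℝ)) : Set (Fin n → ℝ) := {c | maxFace P c = F}

/-- A facet: a nonempty face of codimension 1. -/
def IsFacetOf {n : ℕ} (P F : Set (Fin n → ℝ)) : Prop :=
  IsFaceOf P F ∧ F.Nonempty ∧ sdim F + 1 = sdim P

/-- Embedding of a subset of `Fin d → ℝ` at height `α` in `Fin (d+1) → ℝ`. -/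
def cay {d : ℕ} (α : ℝ) (S : Set (Fin d → ℝ)) : Set (Fin (d + 1) → ℝ) :=
  (fun x => Fin.snoc x α) '' S

/-- Orthogonal projection onto the first `d` coordinates. -/
def projd {d m : ℕ} (x : Fin (d + m) → ℝ) : Fin d → ℝ := fun i => x (Fin.castAdd m i)

/-- Width of a set in direction `c`. -/
def width {n : ℕ} (S : Set (Fin n → ℝ)) (c : Fin n → ℝ) : ℝ :=
  sSup (dotp c '' S) - sInf (dotp c '' S)

/-- `P'` is an `ε`-approximation of `P`. -/
def EpsApprox {n : ℕ} (ε : ℝ) (P P' : Set (Fin n → ℝ)) : Prop :=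
  P ⊆ P' ∧ ∀ c, width P' c ≤ (1 + ε) * width P c

/-- Binary entropy function (with the convention `0 · log₂ 0 = 0`, which holds for
`Real.logb` since `Real.logb 2 0 = 0`). -/
def binEnt (p : ℝ) : ℝ := -(p * Real.logb 2 p) - (1 - p) * Real.logb 2 (1 - p)

/-!
A functional `(c, γ)` on `ℝ^{d+1}` is maximised on the Cayley polytope `P` exactly at the Cayley
embedding of the faces of `P0` and `P1` maximised by `c`, once `γ` levels the two heights; and the
slices of `P` at heights `0` and `1` are `P0` and `P1`. Hence `F` is a face of `P` iff the cone
`C = C_{P0}(F0) ∩ C_{P1}(F1)` is nonempty, and `dim F = dim (lin F0 + lin F1) + 1`, so `F` is a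
facet iff `C ≠ ∅` and `L = lin F0 + lin F1` has codimension one. The cone `C` lies in `L^⊥`, is
relatively open there (a polytope has finitely many vertices), and is pointed because `P0` is
full-dimensional. Such a cone is a ray exactly when `L^⊥` is a line.
-/

open Module Filter Topology

section MaxFace

variable {n : ℕ} {P S A B : Set (Fin n → ℝ)} {c x y : Fin n → ℝ}

lemma dotp_eq_dotProduct : dotp c x = c ⬝ᵥ x := rfl

lemma mem_maxFace : x ∈ maxFace P c ↔ x ∈ P ∧ ∀ y ∈ P, c ⬝ᵥ y ≤ c ⬝ᵥ x := Iff.rfl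

lemma mem_optCone {F : Set (Fin n → ℝ)} : c ∈ optCone P F ↔ maxFace P c = F := Iff.rfl

lemma isLinearMap_dotProduct (c : Fin n → ℝ) : IsLinearMap ℝ (c ⬝ᵥ ·) :=
  (dotProductEquiv ℝ (Fin n) c).isLinear

lemma maxFace_subset : maxFace P c ⊆ P := fun _ hx => hx.1

lemma dotProduct_eq_of_mem_maxFace (hx : x ∈ maxFace P c) (hy : y ∈ maxFace P c) :
    c ⬝ᵥ x = c ⬝ᵥ y :=
  le_antisymm (hy.2 x hx.1) (hx.2 y hy.1)

lemma maxFace_zero : maxFace P 0 = P := by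
  ext x
  simp [mem_maxFace]

lemma maxFace_smul {l : ℝ} (hl : 0 < l) : maxFace P (l • c) = maxFace P c := by
  ext x
  simp only [mem_maxFace, smul_dotProduct, smul_eq_mul, mul_le_mul_iff_right₀ hl]

lemma convex_maxFace (hP : Convex ℝ P) (c : Fin n → ℝ) : Convex ℝ (maxFace P c) := by
  have : maxFace P c = P ∩ ⋂ z ∈ P, {y | c ⬝ᵥ z ≤ c ⬝ᵥ y} := by
    ext x
    simp [mem_maxFace]
  rw [this]
  exact hP.inter (convex_iInter₂ fun z _ => convex_halfSpace_ge (isLinearMap_dotProduct c) _)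

lemma IsFaceOf.convex {F : Set (Fin n → ℝ)} (hF : IsFaceOf P F) (hP : Convex ℝ P) :
    Convex ℝ F := by
  obtain ⟨c, rfl⟩ := hF
  exact convex_maxFace hP c

lemma IsPolytope.convex (hP : IsPolytope P) : Convex ℝ P := by
  obtain ⟨S, rfl⟩ := hP
  exact convex_convexHull ℝ _

lemma dotProduct_eq_zero_of_mem_vectorSpan_maxFace {v : Fin n → ℝ}
    (hv : v ∈ vectorSpan ℝ (maxFace P c)) : c ⬝ᵥ v = 0 := by
  have : vectorSpan ℝ (maxFace P c) ≤ LinearMap.ker (dotProductEquiv ℝ (Fin n) c) := by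
    rw [vectorSpan_def, Submodule.span_le]
    rintro _ ⟨x, hx, y, hy, rfl⟩
    simp [dotProduct_sub, dotProduct_eq_of_mem_maxFace hx hy]
  simpa using this hv

lemma maxFace_union {a b : Fin n → ℝ} (ha : a ∈ maxFace A c) (hb : b ∈ maxFace B c)
    (hab : c ⬝ᵥ a = c ⬝ᵥ b) : maxFace (A ∪ B) c = maxFace A c ∪ maxFace B c := by
  ext x
  constructor
  · rintro ⟨hx | hx, hmax⟩
    · exact Or.inl ⟨hx, fun y hy => hmax y (Or.inl hy)⟩
    · exact Or.inr ⟨hx, fun y hy => hmax y (Or.inr hy)⟩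
  · rintro (⟨hx, hmax⟩ | ⟨hx, hmax⟩)
    · refine ⟨Or.inl hx, fun y hy => hy.elim (hmax y) fun hy => ?_⟩
      exact (hb.2 y hy).trans (hab.symm.trans_le (hmax a ha.1))
    · refine ⟨Or.inr hx, fun y hy => hy.elim (fun hy => ?_) (hmax y)⟩
      exact (ha.2 y hy).trans (hab.trans_le (hmax b hb.1))

/-- Points of `S` off the top level of `c` lie in an open half-space, so they cannot contribute
to a convex combination that reaches the top level. -/
lemma mem_convexHull_sep_dotProduct_eq (hx : x ∈ convexHull ℝ S)
    (hmax : ∀ y ∈ S, c ⬝ᵥ y ≤ c ⬝ᵥ x) : x ∈ convexHull ℝ {y ∈ S | c ⬝ᵥ y = c ⬝ᵥ x} := by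
  set T := {y ∈ S | c ⬝ᵥ y = c ⬝ᵥ x}
  set U := {y ∈ S | c ⬝ᵥ y < c ⬝ᵥ x}
  have hTU : S = T ∪ U := by
    ext y
    refine ⟨fun hy => (hmax y hy).eq_or_lt.imp (⟨hy, ·⟩) (⟨hy, ·⟩), ?_⟩
    rintro (hy | hy) <;> exact hy.1
  have hT : convexHull ℝ T ⊆ {y | c ⬝ᵥ y = c ⬝ᵥ x} :=
    convexHull_min (fun y hy => hy.2) (convex_hyperplane (isLinearMap_dotProduct c) _)
  have hU : convexHull ℝ U ⊆ {y | c ⬝ᵥ y < c ⬝ᵥ x} :=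
    convexHull_min (fun y hy => hy.2) (convex_halfSpace_lt (isLinearMap_dotProduct c) _)
  rw [hTU] at hx
  rcases T.eq_empty_or_nonempty with hT0 | hTne
  · rw [hT0, empty_union] at hx
    exact (lt_irrefl (c ⬝ᵥ x) (hU hx)).elim
  rcases U.eq_empty_or_nonempty with hU0 | hUne
  · rwa [hU0, union_empty] at hx
  rw [convexHull_union hTne hUne, mem_convexJoin] at hx
  obtain ⟨t, ht, u, hu, a, b, ha, hb, hab, hxtu⟩ := hx
  have hct : c ⬝ᵥ t = c ⬝ᵥ x := hT ht
  have hcu : c ⬝ᵥ u < c ⬝ᵥ x := hU hu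
  have hb0 : b = 0 := by
    have hcx := congrArg (c ⬝ᵥ ·) hxtu
    simp only [dotProduct_add, dotProduct_smul, smul_eq_mul, hct] at hcx
    have : b * (c ⬝ᵥ x - c ⬝ᵥ u) = 0 := by linear_combination c ⬝ᵥ x * hab - hcx
    exact (mul_eq_zero.1 this).resolve_right (sub_pos.2 hcu).ne'
  rwa [← hxtu, hb0, zero_smul, add_zero, show a = 1 by linarith, one_smul]

lemma maxFace_convexHull (S : Set (Fin n → ℝ)) (c : Fin n → ℝ) :
    maxFace (convexHull ℝ S) c = convexHull ℝ (maxFace S c) := by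
  refine Subset.antisymm ?_ fun x hx => ?_
  · rintro x ⟨hx, hmax⟩
    have hmaxS : ∀ y ∈ S, c ⬝ᵥ y ≤ c ⬝ᵥ x := fun y hy => hmax y (subset_convexHull ℝ S hy)
    have hsub : {y ∈ S | c ⬝ᵥ y = c ⬝ᵥ x} ⊆ maxFace S c :=
      fun y hy => ⟨hy.1, fun z hz => (hmaxS z hz).trans_eq hy.2.symm⟩
    exact convexHull_mono hsub (mem_convexHull_sep_dotProduct_eq hx hmaxS)
  · obtain ⟨x₀, hx₀⟩ := convexHull_nonempty_iff.mp ⟨x, hx⟩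
    have hS : convexHull ℝ S ⊆ {y | c ⬝ᵥ y ≤ c ⬝ᵥ x₀} :=
      convexHull_min hx₀.2 (convex_halfSpace_le (isLinearMap_dotProduct c) _)
    have hF : convexHull ℝ (maxFace S c) ⊆ {y | c ⬝ᵥ y = c ⬝ᵥ x₀} :=
      convexHull_min (fun y hy => dotProduct_eq_of_mem_maxFace hy hx₀)
        (convex_hyperplane (isLinearMap_dotProduct c) _)
    refine ⟨convexHull_mono maxFace_subset hx, fun y hy => show c ⬝ᵥ y ≤ c ⬝ᵥ x from ?_⟩
    rw [show c ⬝ᵥ x = c ⬝ᵥ x₀ from hF hx]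
    exact hS hy

end MaxFace

section DotOrthogonal

variable {n : ℕ}

def dotOrthogonal (W : Submodule ℝ (Fin n → ℝ)) : Submodule ℝ (Fin n → ℝ) :=
  W.dualAnnihilator.comap (dotProductEquiv ℝ (Fin n)).toLinearMap

lemma mem_dotOrthogonal {W : Submodule ℝ (Fin n → ℝ)} {c : Fin n → ℝ} :
    c ∈ dotOrthogonal W ↔ ∀ x ∈ W, c ⬝ᵥ x = 0 := by
  simp [dotOrthogonal, Submodule.mem_dualAnnihilator]

lemma dotOrthogonal_anti {W W' : Submodule ℝ (Fin n → ℝ)} (h : W ≤ W') :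
    dotOrthogonal W' ≤ dotOrthogonal W :=
  Submodule.comap_mono (Submodule.dualAnnihilator_anti h)

lemma finrank_add_finrank_dotOrthogonal (W : Submodule ℝ (Fin n → ℝ)) :
    finrank ℝ W + finrank ℝ (dotOrthogonal W) = n := by
  rw [dotOrthogonal, Submodule.comap_equiv_eq_map_symm, LinearEquiv.finrank_map_eq,
    Subspace.finrank_add_finrank_dualAnnihilator_eq, Module.finrank_fin_fun]

end DotOrthogonal

section Perturbation

variable {n : ℕ} {P S : Set (Fin n → ℝ)} {c w : Fin n → ℝ}

lemma eventually_maxFace_add_smul_eq (hS : S.Finite)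
    (hw : w ∈ dotOrthogonal (vectorSpan ℝ (maxFace S c))) :
    ∀ᶠ ε in 𝓝 (0 : ℝ), maxFace S (c + ε • w) = maxFace S c := by
  rcases S.eq_empty_or_nonempty with rfl | hne
  · simp [maxFace]
  obtain ⟨x₀, hx₀S, hx₀⟩ := S.exists_max_image (c ⬝ᵥ ·) hS hne
  have hx₀F : x₀ ∈ maxFace S c := ⟨hx₀S, hx₀⟩
  have hval : ∀ ε : ℝ, ∀ x ∈ maxFace S c, (c + ε • w) ⬝ᵥ x = (c + ε • w) ⬝ᵥ x₀ := by
    intro ε x hx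
    have hwx : w ⬝ᵥ (x -ᵥ x₀) = 0 :=
      mem_dotOrthogonal.1 hw _ (vsub_mem_vectorSpan ℝ hx hx₀F)
    rw [vsub_eq_sub, dotProduct_sub, sub_eq_zero] at hwx
    simp only [add_dotProduct, smul_dotProduct, hwx, dotProduct_eq_of_mem_maxFace hx hx₀F]
  -- the finitely many points of `S` below the top level stay below it for small `ε`
  have hlt : ∀ᶠ ε in 𝓝 (0 : ℝ), ∀ y ∈ S \ maxFace S c,
      (c + ε • w) ⬝ᵥ y < (c + ε • w) ⬝ᵥ x₀ := by
    refine hS.sdiff.eventually_all.2 fun y ⟨hyS, hy⟩ => ?_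
    have hlt0 : c ⬝ᵥ y < c ⬝ᵥ x₀ :=
      lt_of_not_ge fun h => hy ⟨hyS, fun z hz => (hx₀ z hz).trans h⟩
    simp only [add_dotProduct, smul_dotProduct, smul_eq_mul]
    exact ContinuousAt.eventually_lt (by fun_prop) (by fun_prop) (by simpa using hlt0)
  filter_upwards [hlt] with ε hε
  ext x
  constructor
  · rintro ⟨hxS, hxmax⟩
    by_contra hx
    exact (hε x ⟨hxS, hx⟩).not_ge (hxmax x₀ hx₀S)
  · intro hx
    refine ⟨hx.1, fun y hyS => show (c + ε • w) ⬝ᵥ y ≤ (c + ε • w) ⬝ᵥ x from ?_⟩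
    rw [hval ε x hx]
    by_cases hy : y ∈ maxFace S c
    · exact (hval ε y hy).le
    · exact (hε y ⟨hyS, hy⟩).le

lemma IsPolytope.eventually_maxFace_add_smul_eq (hP : IsPolytope P)
    (hw : w ∈ dotOrthogonal (vectorSpan ℝ (maxFace P c))) :
    ∀ᶠ ε in 𝓝 (0 : ℝ), maxFace P (c + ε • w) = maxFace P c := by
  obtain ⟨S, rfl⟩ := hP
  have hsub : maxFace (S : Set (Fin n → ℝ)) c ⊆ maxFace (convexHull ℝ S) c := by
    rw [maxFace_convexHull]
    exact subset_convexHull ℝ _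
  filter_upwards [eventually_maxFace_add_smul_eq S.finite_toSet
    (dotOrthogonal_anti (vectorSpan_mono ℝ hsub) hw)] with ε hε
  rw [maxFace_convexHull, maxFace_convexHull, hε]

end Perturbation

section Cayley

variable {d : ℕ} {α β γ : ℝ} {A B S F : Set (Fin d → ℝ)} {c x x₀ x₁ : Fin d → ℝ}

def snocLinear : (Fin d → ℝ) →ₗ[ℝ] (Fin (d + 1) → ℝ) where
  toFun x := Fin.snoc x 0
  map_add' x y := by
    ext i
    induction i using Fin.lastCases <;> simp
  map_smul' a x := by
    ext i
    induction i using Fin.lastCases <;> simp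

def snocAffine (α : ℝ) : (Fin d → ℝ) →ᵃ[ℝ] (Fin (d + 1) → ℝ) where
  toFun x := Fin.snoc x α
  linear := snocLinear
  map_vadd' x v := by
    ext i
    induction i using Fin.lastCases <;> simp [snocLinear]

lemma cay_eq_image_snocAffine (α : ℝ) (S : Set (Fin d → ℝ)) : cay α S = snocAffine α '' S :=
  rfl

lemma snocLinear_injective : Function.Injective (snocLinear (d := d)) :=
  Fin.snoc_left_injective (α := fun _ => ℝ) 0

lemma snoc_mem_cay (hx : x ∈ S) (α : ℝ) : Fin.snoc x α ∈ cay α S :=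
  mem_image_of_mem _ hx

lemma dotProduct_snoc_snoc (c : Fin d → ℝ) (γ : ℝ) (x : Fin d → ℝ) (α : ℝ) :
    (Fin.snoc c γ : Fin (d + 1) → ℝ) ⬝ᵥ Fin.snoc x α = c ⬝ᵥ x + γ * α := by
  simp [dotProduct, Fin.sum_univ_castSucc]

lemma convexHull_cay (α : ℝ) (S : Set (Fin d → ℝ)) :
    convexHull ℝ (cay α S) = cay α (convexHull ℝ S) := by
  rw [cay_eq_image_snocAffine, cay_eq_image_snocAffine, AffineMap.image_convexHull]

lemma vectorSpan_cay (α : ℝ) (S : Set (Fin d → ℝ)) :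
    vectorSpan ℝ (cay α S) = (vectorSpan ℝ S).map snocLinear := by
  rw [cay_eq_image_snocAffine, ← AffineMap.map_vectorSpan]
  rfl

lemma maxFace_cay : maxFace (cay α S) (Fin.snoc c γ) = cay α (maxFace S c) := by
  ext z
  constructor
  · rintro ⟨⟨x, hx, rfl⟩, hmax⟩
    refine ⟨x, ⟨hx, fun y hy => ?_⟩, rfl⟩
    simpa [dotp_eq_dotProduct, dotProduct_snoc_snoc] using hmax _ ⟨y, hy, rfl⟩
  · rintro ⟨x, ⟨hx, hmax⟩, rfl⟩
    refine ⟨⟨x, hx, rfl⟩, ?_⟩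
    rintro _ ⟨y, hy, rfl⟩
    simpa [dotp_eq_dotProduct, dotProduct_snoc_snoc] using hmax y hy

lemma maxFace_preimage_snoc {T : Set (Fin (d + 1) → ℝ)}
    (hx₀ : Fin.snoc x₀ α ∈ maxFace T (Fin.snoc c γ)) :
    maxFace ((Fin.snoc · α) ⁻¹' T) c = (Fin.snoc · α) ⁻¹' maxFace T (Fin.snoc c γ) := by
  ext x
  simp only [mem_preimage, mem_maxFace, dotProduct_snoc_snoc]
  refine and_congr_right fun _ => ⟨fun hmax y hy => ?_, fun hmax y hy => ?_⟩
  · have := hx₀.2 y hy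
    rw [dotp_eq_dotProduct, dotp_eq_dotProduct, dotProduct_snoc_snoc] at this
    linarith [hmax x₀ hx₀.1]
  · simpa [dotp_eq_dotProduct, dotProduct_snoc_snoc] using hmax _ hy

/-- The functional `(0, α - β)` is maximal on the hull exactly at height `α`. -/
lemma preimage_snoc_convexHull_cay_union (hαβ : α ≠ β) :
    (Fin.snoc · α) ⁻¹' convexHull ℝ (cay α A ∪ cay β B) = convexHull ℝ A := by
  ext x
  refine ⟨fun hx => ?_, fun hx => ?_⟩
  · set e : Fin (d + 1) → ℝ := Fin.snoc 0 (α - β)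
    have he : ∀ y γ, e ⬝ᵥ Fin.snoc y γ = (α - β) * γ := by simp [e, dotProduct_snoc_snoc]
    have hlevel := mem_convexHull_sep_dotProduct_eq (c := e) hx (by
      rintro _ (⟨a, -, rfl⟩ | ⟨b, -, rfl⟩) <;> rw [he, he]
      nlinarith [sq_nonneg (α - β)])
    have hsub : {y ∈ cay α A ∪ cay β B | e ⬝ᵥ y = e ⬝ᵥ Fin.snoc x α} ⊆ cay α A := by
      rintro _ ⟨⟨a, ha, rfl⟩ | ⟨b, -, rfl⟩, h⟩
      · exact ⟨a, ha, rfl⟩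
      · rw [he, he] at h
        exact absurd (mul_left_cancel₀ (sub_ne_zero.2 hαβ) h).symm hαβ
    obtain ⟨x', hx', h⟩ := convexHull_cay α A ▸ convexHull_mono hsub hlevel
    rwa [← (Fin.snoc_inj.1 h).1]
  · exact convexHull_mono subset_union_left (convexHull_cay α A ▸ ⟨x, hx, rfl⟩)

lemma maxFace_eq_of_maxFace_convexHull_cay_union_eq {G : Set (Fin d → ℝ)} (hαβ : α ≠ β)
    (hA : Convex ℝ A) (hF : Convex ℝ F) (hx₀ : x₀ ∈ F)
    (h : maxFace (convexHull ℝ (cay α A ∪ cay β B)) (Fin.snoc c γ) =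
      convexHull ℝ (cay α F ∪ cay β G)) :
    maxFace A c = F := by
  have hx₀' : Fin.snoc x₀ α ∈ maxFace (convexHull ℝ (cay α A ∪ cay β B)) (Fin.snoc c γ) :=
    h ▸ subset_convexHull ℝ _ (Or.inl ⟨x₀, hx₀, rfl⟩)
  rw [← hA.convexHull_eq, ← preimage_snoc_convexHull_cay_union hαβ (B := B),
    maxFace_preimage_snoc hx₀', h, preimage_snoc_convexHull_cay_union hαβ, hF.convexHull_eq]

lemma maxFace_convexHull_cay_union {P0 P1 F0 F1 : Set (Fin d → ℝ)}
    (h0 : maxFace P0 c = F0) (h1 : maxFace P1 c = F1) (hx₀ : x₀ ∈ F0) (hx₁ : x₁ ∈ F1)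
    (hγ : c ⬝ᵥ x₀ + γ * α = c ⬝ᵥ x₁ + γ * β) :
    maxFace (convexHull ℝ (cay α P0 ∪ cay β P1)) (Fin.snoc c γ) =
      convexHull ℝ (cay α F0 ∪ cay β F1) := by
  rw [maxFace_convexHull, maxFace_union (a := Fin.snoc x₀ α) (b := Fin.snoc x₁ β),
    maxFace_cay, maxFace_cay, h0, h1]
  · rw [maxFace_cay, h0]
    exact ⟨x₀, hx₀, rfl⟩
  · rw [maxFace_cay, h1]
    exact ⟨x₁, hx₁, rfl⟩
  · rwa [dotProduct_snoc_snoc, dotProduct_snoc_snoc]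

lemma isFaceOf_convexHull_cay_union_iff {P0 P1 F0 F1 : Set (Fin d → ℝ)}
    (hP0 : Convex ℝ P0) (hP1 : Convex ℝ P1) (hF0 : Convex ℝ F0) (hF1 : Convex ℝ F1)
    (hx₀ : x₀ ∈ F0) (hx₁ : x₁ ∈ F1) :
    IsFaceOf (convexHull ℝ (cay 0 P0 ∪ cay 1 P1)) (convexHull ℝ (cay 0 F0 ∪ cay 1 F1)) ↔
      (optCone P0 F0 ∩ optCone P1 F1).Nonempty := by
  constructor
  · rintro ⟨c', hc'⟩
    obtain ⟨c, γ, rfl⟩ : ∃ c γ, c' = Fin.snoc c γ := ⟨_, _, (Fin.snoc_init_self c').symm⟩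
    refine ⟨c, maxFace_eq_of_maxFace_convexHull_cay_union_eq zero_ne_one hP0 hF0 hx₀ hc'.symm,
      ?_⟩
    rw [union_comm (cay 0 P0), union_comm (cay 0 F0)] at hc'
    exact maxFace_eq_of_maxFace_convexHull_cay_union_eq one_ne_zero hP1 hF1 hx₁ hc'.symm
  · rintro ⟨c, h0, h1⟩
    exact ⟨_, (maxFace_convexHull_cay_union (γ := c ⬝ᵥ x₀ - c ⬝ᵥ x₁) h0 h1 hx₀ hx₁
      (by ring)).symm⟩

lemma sdim_convexHull_cay_union (hαβ : α ≠ β) (hx₀ : x₀ ∈ A) (hx₁ : x₁ ∈ B) :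
    sdim (convexHull ℝ (cay α A ∪ cay β B)) = finrank ℝ ↥(vectorSpan ℝ A ⊔ vectorSpan ℝ B) + 1 := by
  have hv : (Fin.snoc x₁ β : Fin (d + 1) → ℝ) -ᵥ (Fin.snoc x₀ α : Fin (d + 1) → ℝ) =
      Fin.snoc (x₁ - x₀) (β - α) := by
    ext i
    induction i using Fin.lastCases <;> simp
  have hspan : vectorSpan ℝ (convexHull ℝ (cay α A ∪ cay β B)) =
      (vectorSpan ℝ A ⊔ vectorSpan ℝ B).map snocLinear ⊔ ℝ ∙ Fin.snoc (x₁ - x₀) (β - α) := by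
    rw [← direction_affineSpan, affineSpan_convexHull, AffineSubspace.span_union,
      AffineSubspace.direction_sup (mem_affineSpan ℝ (snoc_mem_cay hx₀ α))
        (mem_affineSpan ℝ (snoc_mem_cay hx₁ β)),
      direction_affineSpan, direction_affineSpan, vectorSpan_cay, vectorSpan_cay,
      Submodule.map_sup, hv]
  have hnotMem : Fin.snoc (x₁ - x₀) (β - α) ∉ (vectorSpan ℝ A ⊔ vectorSpan ℝ B).map snocLinear := by
    rintro ⟨y, -, hy⟩
    have := congrFun hy (Fin.last d)
    simp only [snocLinear, LinearMap.coe_mk, AddHom.coe_mk, Fin.snoc_last] at this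
    exact sub_ne_zero.2 hαβ.symm this.symm
  rw [sdim, hspan, Submodule.finrank_sup_span_singleton hnotMem,
    (Submodule.equivMapOfInjective _ snocLinear_injective _).finrank_eq.symm]

end Cayley

section OptCone

variable {n : ℕ} {P P0 P1 F F0 F1 : Set (Fin n → ℝ)} {c w : Fin n → ℝ}

lemma smul_mem_optCone {l : ℝ} (hl : 0 < l) (hc : c ∈ optCone P F) : l • c ∈ optCone P F :=
  (maxFace_smul hl).trans hc

lemma optCone_inter_subset_dotOrthogonal :
    optCone P0 F0 ∩ optCone P1 F1 ⊆ dotOrthogonal (vectorSpan ℝ F0 ⊔ vectorSpan ℝ F1) := by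
  rintro c ⟨rfl : maxFace P0 c = F0, rfl : maxFace P1 c = F1⟩
  refine mem_dotOrthogonal.2 fun x hx => ?_
  obtain ⟨y, hy, z, hz, rfl⟩ := Submodule.mem_sup.1 hx
  rw [dotProduct_add, dotProduct_eq_zero_of_mem_vectorSpan_maxFace hy,
    dotProduct_eq_zero_of_mem_vectorSpan_maxFace hz, add_zero]

lemma exists_ne_zero_add_smul_mem_optCone_inter (h0 : IsPolytope P0) (h1 : IsPolytope P1)
    (hc : c ∈ optCone P0 F0 ∩ optCone P1 F1)
    (hw : w ∈ dotOrthogonal (vectorSpan ℝ F0 ⊔ vectorSpan ℝ F1)) :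
    ∃ ε : ℝ, ε ≠ 0 ∧ c + ε • w ∈ optCone P0 F0 ∩ optCone P1 F1 := by
  obtain ⟨hc0 : maxFace P0 c = F0, hc1 : maxFace P1 c = F1⟩ := hc
  have e0 := h0.eventually_maxFace_add_smul_eq (hc0 ▸ dotOrthogonal_anti le_sup_left hw)
  have e1 := h1.eventually_maxFace_add_smul_eq (hc1 ▸ dotOrthogonal_anti le_sup_right hw)
  obtain ⟨ε, ⟨h0ε, h1ε⟩, hε⟩ :=
    (((e0.and e1).filter_mono nhdsWithin_le_nhds).and self_mem_nhdsWithin).exists (f := 𝓝[≠] 0)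
  exact ⟨ε, hε, h0ε.trans hc0, h1ε.trans hc1⟩

lemma maxFace_eq_self_of_maxFace_smul_eq {l : ℝ} (hl : l ≤ 0)
    (h : maxFace P (l • c) = maxFace P c) (hne : (maxFace P c).Nonempty) : maxFace P c = P := by
  rcases hl.lt_or_eq with hl | rfl
  · obtain ⟨x₀, hx₀⟩ := hne
    have hx₀' : x₀ ∈ maxFace P (l • c) := h ▸ hx₀
    refine maxFace_subset.antisymm fun y hy => ⟨hy, fun z hz => ?_⟩
    have hyx₀ : l * c ⬝ᵥ y ≤ l * c ⬝ᵥ x₀ := by simpa [dotp_eq_dotProduct] using hx₀'.2 y hy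
    exact (hx₀.2 z hz).trans ((mul_le_mul_left_of_neg hl).1 hyx₀)
  · rwa [zero_smul, maxFace_zero, eq_comm] at h

lemma eq_zero_of_maxFace_eq_self (hP : sdim P = n) (h : maxFace P c = P) : c = 0 := by
  have htop : vectorSpan ℝ (maxFace P c) = ⊤ :=
    Submodule.eq_top_of_finrank_eq (by rw [h, ← sdim, hP, Module.finrank_fin_fun])
  ext i
  simpa using dotProduct_eq_zero_of_mem_vectorSpan_maxFace (htop ▸ Submodule.mem_top :
    Pi.single i 1 ∈ vectorSpan ℝ (maxFace P c))

lemma eq_zero_of_smul_mem_optCone (hP : sdim P = n) (hF : F.Nonempty) (hc : c ∈ optCone P F)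
    {l : ℝ} (hl : l ≤ 0) (hlc : l • c ∈ optCone P F) : c = 0 :=
  eq_zero_of_maxFace_eq_self hP
    (maxFace_eq_self_of_maxFace_smul_eq hl (hlc.trans hc.symm) ((mem_optCone.1 hc).symm ▸ hF))

end OptCone

lemma exists_ray_iff_finrank_eq_one {V : Type*} [AddCommGroup V] [Module ℝ V]
    {N : Submodule ℝ V} {C : Set V} (hCN : C ⊆ N)
    (hsmul : ∀ c ∈ C, ∀ l : ℝ, 0 < l → l • c ∈ C)
    (hopen : ∀ c ∈ C, ∀ w ∈ N, ∃ ε : ℝ, ε ≠ 0 ∧ c + ε • w ∈ C)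
    (hpointed : ∀ c ∈ C, ∀ l : ℝ, l ≤ 0 → l • c ∈ C → c = 0) :
    (∃ r : V, r ≠ 0 ∧ C = {c | ∃ l : ℝ, 0 < l ∧ c = l • r}) ↔
      C.Nonempty ∧ finrank ℝ N = 1 := by
  constructor
  · rintro ⟨r, hr0, rfl⟩
    have hr : r ∈ {c | ∃ l : ℝ, 0 < l ∧ c = l • r} := ⟨1, one_pos, (one_smul ℝ r).symm⟩
    have hN : N = ℝ ∙ r := by
      refine le_antisymm (fun w hw => ?_) ((Submodule.span_singleton_le_iff_mem _ _).2 (hCN hr))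
      obtain ⟨ε, hε, l, -, hl⟩ := hopen r hr w hw
      refine Submodule.mem_span_singleton.2 ⟨ε⁻¹ * (l - 1), ?_⟩
      rw [mul_smul, sub_smul, one_smul, ← hl, add_sub_cancel_left, smul_smul,
        inv_mul_cancel₀ hε, one_smul]
    exact ⟨⟨r, hr⟩, hN ▸ finrank_span_singleton hr0⟩
  · rintro ⟨⟨c, hc⟩, hN⟩
    obtain ⟨r, hr, hr0⟩ : ∃ r ∈ C, r ≠ 0 := by
      by_cases hc0 : c = 0
      · obtain ⟨w, hw, hw0⟩ := Submodule.exists_mem_ne_zero_of_ne_bot fun h : N = ⊥ => by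
          rw [h, finrank_bot] at hN
          exact zero_ne_one hN
        obtain ⟨ε, hε, hεw⟩ := hopen c hc w hw
        exact ⟨c + ε • w, hεw, by simpa [hc0] using ⟨hε, hw0⟩⟩
      · exact ⟨c, hc, hc0⟩
    have hN : N = ℝ ∙ r := eq_span_singleton_of_mem_of_finrank_eq_one hN (hCN hr) hr0
    refine ⟨r, hr0, Subset.antisymm (fun x hx => ?_) ?_⟩
    · obtain ⟨l, rfl⟩ := Submodule.mem_span_singleton.1 (hN ▸ hCN hx)
      exact ⟨l, lt_of_not_ge fun hl => hr0 (hpointed r hr l hl hx), rfl⟩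
    · rintro _ ⟨l, hl, rfl⟩
      exact hsmul r hr l hl

theorem cayley_facet_iff_general (d : ℕ)
    (P0 P1 : Set (Fin d → ℝ)) (h0 : IsPolytope P0) (h1 : IsPolytope P1)
    (hd0 : sdim P0 = d)
    (F0 F1 : Set (Fin d → ℝ))
    (hF0 : IsFaceOf P0 F0) (hF1 : IsFaceOf P1 F1)
    (hF0ne : F0.Nonempty) (hF1ne : F1.Nonempty)
    (P : Set (Fin (d + 1) → ℝ)) (hP : P = convexHull ℝ (cay 0 P0 ∪ cay 1 P1))
    (F : Set (Fin (d + 1) → ℝ)) (hF : F = convexHull ℝ (cay 0 F0 ∪ cay 1 F1)) :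
    (IsFaceOf P F ∧ sdim F = d) ↔
      ∃ r : Fin d → ℝ, r ≠ 0 ∧
        optCone P0 F0 ∩ optCone P1 F1 = {c | ∃ l : ℝ, 0 < l ∧ c = l • r} := by
  obtain ⟨x₀, hx₀⟩ := hF0ne
  obtain ⟨x₁, hx₁⟩ := hF1ne
  subst hP hF
  have hL := finrank_add_finrank_dotOrthogonal (vectorSpan ℝ F0 ⊔ vectorSpan ℝ F1)
  rw [isFaceOf_convexHull_cay_union_iff h0.convex h1.convex (hF0.convex h0.convex)
      (hF1.convex h1.convex) hx₀ hx₁, sdim_convexHull_cay_union zero_ne_one hx₀ hx₁,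
    exists_ray_iff_finrank_eq_one optCone_inter_subset_dotOrthogonal
      (fun c hc l hl => ⟨smul_mem_optCone hl hc.1, smul_mem_optCone hl hc.2⟩)
      (fun c hc w hw => exists_ne_zero_add_smul_mem_optCone_inter h0 h1 hc hw)
      (fun c hc l hl hlc => eq_zero_of_smul_mem_optCone hd0 ⟨x₀, hx₀⟩ hc.1 hl hlc.1)]
  exact and_congr_right fun _ => by omega

/-- Facets of the Cayley embedding: the Cayley embedding `F` of faces `F0`, `F1` is a
facet (a `d`-dimensional face) of the `(d+1)`-dimensional Cayley embedding `P` iff the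
intersection of the optimality cones of `F0` and `F1` is a ray spanned by some
nonzero `r`. -/
theorem cayley_facet_iff (d : ℕ)
    (P0 P1 : Set (Fin d → ℝ)) (h0 : IsPolytope P0) (h1 : IsPolytope P1)
    (hne0 : P0.Nonempty) (hne1 : P1.Nonempty)
    (hd0 : sdim P0 = d) (hd1 : sdim P1 = d)
    (F0 F1 : Set (Fin d → ℝ))
    (hF0 : IsFaceOf P0 F0) (hF1 : IsFaceOf P1 F1)
    (hF0ne : F0.Nonempty) (hF1ne : F1.Nonempty)
    (P : Set (Fin (d + 1) → ℝ)) (hP : P = convexHull ℝ (cay 0 P0 ∪ cay 1 P1))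
    (F : Set (Fin (d + 1) → ℝ)) (hF : F = convexHull ℝ (cay 0 F0 ∪ cay 1 F1)) :
    (IsFaceOf P F ∧ sdim F = d) ↔
      ∃ r : Fin d → ℝ, r ≠ 0 ∧
        optCone P0 F0 ∩ optCone P1 F1 = {c | ∃ l : ℝ, 0 < l ∧ c = l • r} :=
  cayley_facet_iff_general d P0 P1 h0 h1 hd0 F0 F1 hF0 hF1 hF0ne hF1ne P hP F hF
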